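/- Existence of the boundary form at infinity: if sequences x, y, f, g : ℕ → ℂ^{2n} satisfy ℒ(x)(t) = W(t)·R(f)(t) and ℒ(y)(t) = W(t)·R(g)(t) for all t ∈ ℕ, and each of the four sequences u ∈ {x, y, f, g} is square-summable with respect to W, i.e. the series ∑_{t=0}^{∞} R(u)(t)* W(t) R(u)(t) converges, then the limit lim_{t→∞} y(t)* J x(t) exists (the complex sequence t ↦ y(t)* J x(t) converges). -/

import Mathlib

/-!
Pairing the two equations with `R(y)` and `R(x)` and using `J* = -J` and `P* = P` gives the
discrete Lagrange identity
  `y(t+1)* J x(t+1) - y(t)* J x(t) = R(y)(t)* W(t) R(f)(t) - R(g)(t)* W(t) R(x)(t)`.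
By Cauchy–Schwarz for the semi-inner product `u* W(t) v`, the right-hand side is summable, and
telescoping shows that `y(t)* J x(t) - y(0)* J x(0)` are the partial sums of its series.
-/

open Matrix Filter Topology
open scoped ComplexOrder

noncomputable section

/-- The `2n × 2n` canonical symplectic matrix `J = [[0, -Iₙ],[Iₙ, 0]]`,
with `ℂ^{2n}` modelled as functions on `Fin n ⊕ Fin n`. -/
def symJ (n : ℕ) : Matrix (Fin n ⊕ Fin n) (Fin n ⊕ Fin n) ℂ :=
  Matrix.fromBlocks 0 (-1) 1 0

/-- The partial right shift `R(y)(t) = (y₁(t+1), y₂(t))`. -/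
def Rsh (n : ℕ) (y : ℕ → (Fin n ⊕ Fin n → ℂ)) (t : ℕ) : Fin n ⊕ Fin n → ℂ :=
  Sum.elim (fun i => y (t + 1) (Sum.inl i)) (fun i => y t (Sum.inr i))

/-- The difference expression `ℒ(y)(t) = J·(y(t+1) − y(t)) − P(t)·R(y)(t)`. -/
def Lexpr (n : ℕ) (P : ℕ → Matrix (Fin n ⊕ Fin n) (Fin n ⊕ Fin n) ℂ)
    (y : ℕ → (Fin n ⊕ Fin n → ℂ)) (t : ℕ) : Fin n ⊕ Fin n → ℂ :=
  (symJ n).mulVec (y (t + 1) - y t) - (P t).mulVec (Rsh n y t)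

lemma Matrix.PosSemidef.norm_dotProduct_mulVec_sq_le {m 𝕜 : Type*} [Fintype m] [RCLike 𝕜]
    {W : Matrix m m 𝕜} (hW : W.PosSemidef) (a b : m → 𝕜) :
    ‖star a ⬝ᵥ W *ᵥ b‖ ^ 2 ≤ RCLike.re (star a ⬝ᵥ W *ᵥ a) * RCLike.re (star b ⬝ᵥ W *ᵥ b) := by
  -- `m → 𝕜` already carries the sup norm, so only use the Cauchy–Schwarz form free of `‖·‖` on it.
  let := W.toSeminormedAddCommGroup hW
  let := W.toInnerProductSpace hW
  have hinner (u v : m → 𝕜) : inner 𝕜 u v = star u ⬝ᵥ W *ᵥ v := dotProduct_comm _ _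
  have := inner_mul_inner_self_le (𝕜 := 𝕜) a b
  rwa [norm_inner_symm b a, ← sq, hinner, hinner, hinner] at this

lemma summable_dotProduct_mulVec_of_posSemidef {ι m 𝕜 : Type*} [Fintype m] [RCLike 𝕜]
    {W : ι → Matrix m m 𝕜} (hW : ∀ t, (W t).PosSemidef) {a b : ι → m → 𝕜}
    (ha : Summable fun t => star (a t) ⬝ᵥ W t *ᵥ a t)
    (hb : Summable fun t => star (b t) ⬝ᵥ W t *ᵥ b t) :
    Summable fun t => star (a t) ⬝ᵥ W t *ᵥ b t := by
  refine .of_norm_bounded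
    (((RCLike.reCLM.summable ha).add (RCLike.reCLM.summable hb)).div_const 2) fun t => ?_
  have hCS := (hW t).norm_dotProduct_mulVec_sq_le (a t) (b t)
  have ha₀ := (hW t).re_dotProduct_nonneg (a t)
  have hb₀ := (hW t).re_dotProduct_nonneg (b t)
  simp only [RCLike.reCLM_apply]
  -- `‖z‖ ≤ √(AB) ≤ (A + B) / 2`
  nlinarith [norm_nonneg (star (a t) ⬝ᵥ W t *ᵥ b t),
    sq_nonneg (RCLike.re (star (a t) ⬝ᵥ W t *ᵥ a t) - RCLike.re (star (b t) ⬝ᵥ W t *ᵥ b t))]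

lemma exists_tendsto_of_summable_sub {G : Type*} [AddCommGroup G] [TopologicalSpace G]
    [IsTopologicalAddGroup G] {S : ℕ → G} (h : Summable fun t => S (t + 1) - S t) :
    ∃ l, Tendsto S atTop (𝓝 l) := by
  have := h.hasSum.tendsto_sum_nat.const_add (S 0)
  simp only [Finset.sum_range_sub, add_sub_cancel] at this
  exact ⟨_, this⟩

lemma conjTranspose_symJ (n : ℕ) : (symJ n)ᴴ = -symJ n := by
  simp [symJ, fromBlocks_conjTranspose, fromBlocks_neg]

lemma symJ_mulVec (n : ℕ) (v : Fin n ⊕ Fin n → ℂ) :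
    symJ n *ᵥ v = Sum.elim (fun i => -v (Sum.inr i)) (fun i => v (Sum.inl i)) := by
  ext (i | i) <;> simp [symJ, fromBlocks_mulVec, neg_mulVec]

lemma symJ_product_rule (n : ℕ) (x y : ℕ → Fin n ⊕ Fin n → ℂ) (t : ℕ) :
    star (Rsh n y t) ⬝ᵥ symJ n *ᵥ (x (t + 1) - x t)
      + star (y (t + 1) - y t) ⬝ᵥ symJ n *ᵥ Rsh n x t
    = star (y (t + 1)) ⬝ᵥ symJ n *ᵥ x (t + 1) - star (y t) ⬝ᵥ symJ n *ᵥ x t := by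
  simp only [symJ_mulVec, Rsh, dotProduct, Fintype.sum_sum_type, Pi.sub_apply, Pi.star_apply,
    star_sub, Sum.elim_inl, Sum.elim_inr, mul_sub, sub_mul, mul_neg, neg_sub,
    Finset.sum_sub_distrib, Finset.sum_neg_distrib]
  ring

lemma star_mulVec_dotProduct {m α : Type*} [Fintype m] [CommSemiring α] [StarRing α]
    (A : Matrix m m α) (v w : m → α) :
    star (A *ᵥ v) ⬝ᵥ w = star v ⬝ᵥ Aᴴ *ᵥ w := by
  rw [star_mulVec, dotProduct_mulVec]

lemma lagrange_identity (n : ℕ) {P : ℕ → Matrix (Fin n ⊕ Fin n) (Fin n ⊕ Fin n) ℂ} {t : ℕ}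
    (hP : (P t).IsHermitian) (x y : ℕ → Fin n ⊕ Fin n → ℂ) :
    star (Rsh n y t) ⬝ᵥ Lexpr n P x t - star (Lexpr n P y t) ⬝ᵥ Rsh n x t
    = star (y (t + 1)) ⬝ᵥ symJ n *ᵥ x (t + 1) - star (y t) ⬝ᵥ symJ n *ᵥ x t := by
  rw [← symJ_product_rule]
  simp only [Lexpr, star_sub, sub_dotProduct, dotProduct_sub, star_mulVec_dotProduct, hP.eq,
    conjTranspose_symJ, neg_mulVec, dotProduct_neg]
  ring

theorem boundary_form_exists_general (n : ℕ)
    (P W : ℕ → Matrix (Fin n ⊕ Fin n) (Fin n ⊕ Fin n) ℂ)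
    (hP : ∀ t, (P t).IsHermitian) (hW : ∀ t, (W t).PosSemidef)
    (x y f g : ℕ → (Fin n ⊕ Fin n → ℂ))
    (hx : ∀ t, Lexpr n P x t = (W t).mulVec (Rsh n f t))
    (hy : ∀ t, Lexpr n P y t = (W t).mulVec (Rsh n g t))
    (hsq : ∀ u ∈ ({x, y, f, g} : Set (ℕ → (Fin n ⊕ Fin n → ℂ))),
      Summable (fun t => star (Rsh n u t) ⬝ᵥ (W t).mulVec (Rsh n u t))) :
    ∃ l : ℂ, Tendsto (fun t => star (y t) ⬝ᵥ (symJ n).mulVec (x t)) atTop (𝓝 l) := by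
  have hstep (t : ℕ) :
      star (Rsh n y t) ⬝ᵥ W t *ᵥ Rsh n f t - star (Rsh n g t) ⬝ᵥ W t *ᵥ Rsh n x t
        = star (y (t + 1)) ⬝ᵥ symJ n *ᵥ x (t + 1) - star (y t) ⬝ᵥ symJ n *ᵥ x t := by
    rw [← lagrange_identity n (hP t), hx, hy, star_mulVec_dotProduct, (hW t).isHermitian.eq]
  have hyf := summable_dotProduct_mulVec_of_posSemidef hW (hsq y (by simp)) (hsq f (by simp))
  have hgx := summable_dotProduct_mulVec_of_posSemidef hW (hsq g (by simp)) (hsq x (by simp))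
  exact exists_tendsto_of_summable_sub ((hyf.sub hgx).congr hstep)

/-- Existence of the boundary form at infinity: if `ℒ(x) = W R(f)`, `ℒ(y) = W R(g)` and
`x, y, f, g` are square-summable with respect to `W`, then `lim_{t→∞} y(t)* J x(t)` exists. -/
theorem boundary_form_exists (n : ℕ) (hn : 0 < n)
    (P W : ℕ → Matrix (Fin n ⊕ Fin n) (Fin n ⊕ Fin n) ℂ)
    (hP : ∀ t, (P t).IsHermitian) (hW : ∀ t, (W t).PosSemidef)
    (x y f g : ℕ → (Fin n ⊕ Fin n → ℂ))
    (hx : ∀ t, Lexpr n P x t = (W t).mulVec (Rsh n f t))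
    (hy : ∀ t, Lexpr n P y t = (W t).mulVec (Rsh n g t))
    (hsq : ∀ u ∈ ({x, y, f, g} : Set (ℕ → (Fin n ⊕ Fin n → ℂ))),
      Summable (fun t => star (Rsh n u t) ⬝ᵥ (W t).mulVec (Rsh n u t))) :
    ∃ l : ℂ, Tendsto (fun t => star (y t) ⬝ᵥ (symJ n).mulVec (x t)) atTop (𝓝 l) :=
  boundary_form_exists_general n P W hP hW x y f g hx hy hsq

end
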